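/- Let X and Y be Hilbert spaces, T : X → Y a bounded linear operator (no finiteness assumption on dim N(T)) with a least-squares projection approximation {(X_n, T_n)}. If sup_n ‖T_n† T‖ < +∞, then the LPA has kernel approximability and sup_n gap(P_{N(T)^⊥}(X_n), T*T(X_n)) < 1 (i.e., the offset angles θ_n = arcsin gap(T†T(X_n), T*T(X_n)) satisfy sup_n θ_n < π/2). -/

import Mathlib

/-!
Write `Vₙ = N(Tₙ)ᗮ ⊆ Xₙ`. Since `Tₙ†` picks the unique least-squares solution in `Vₙ`, the bound
`‖Tₙ†T‖ ≤ C` says: every `v ∈ Vₙ` with `T v = P_{T(Xₙ)} T x` has `‖v‖ ≤ C ‖x‖`.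

For `x ∈ N(T)` and `p = P_{Xₙ} x`, the vector `p - Tₙ†T p` lies in `N(T) ∩ Xₙ` within
`(1 + C) ‖x - p‖ → 0` of `x`, which is kernel approximability.

For the gap, let `Wₙ = T*T(Xₙ)`. As `T(v - P_{Wₙ} v) ⊥ T(Xₙ)`, the bound gives
`‖v‖ ≤ C ‖P_{Wₙ} v‖` on `Vₙ`; since `T*T` maps `Vₙ` isomorphically onto `Wₙ`, `P_{Wₙ}` maps `Vₙ`
onto `Wₙ`. So a unit vector of `P_{N(T)ᗮ}(Xₙ)` is `P_{N(T)ᗮ} v`, and one of `Wₙ` is `P_{Wₙ} v`, for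
some `v ∈ Vₙ` of norm at most `C`; either way its projection onto the other subspace has norm at
least `1/C`, so both one-sided gaps are at most `√(1 - C⁻²)`.
-/

open Filter Topology Metric Submodule ContinuousLinearMap

/-- Orthogonal projection onto a subspace `K` (as an operator `H →L[ℝ] H`),
defined whenever `K` admits orthogonal projections (e.g. `K` closed). -/
noncomputable def orthProj {H : Type*} [NormedAddCommGroup H] [InnerProductSpace ℝ H]
    (K : Submodule ℝ H) : H →L[ℝ] H :=
  open scoped Classical in
  if h : HasOrthogonalProjection K then
    haveI := h
    K.subtypeL.comp (orthogonalProjection K)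
  else 0

/-- `δ(M,N) = sup {dist(x,N) : x ∈ M, ‖x‖ = 1}` (0 if `M = {0}`, as `sSup ∅ = 0` in `ℝ`). -/
noncomputable def deltaSub {H : Type*} [NormedAddCommGroup H] [InnerProductSpace ℝ H]
    (M N : Submodule ℝ H) : ℝ :=
  sSup {d : ℝ | ∃ x ∈ M, ‖x‖ = 1 ∧ d = Metric.infDist x (N : Set H)}

/-- The gap between two subspaces. -/
noncomputable def gapSub {H : Type*} [NormedAddCommGroup H] [InnerProductSpace ℝ H]
    (M N : Submodule ℝ H) : ℝ :=
  max (deltaSub M N) (deltaSub N M)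

section InnerProductSpace

variable {H : Type*} [NormedAddCommGroup H] [InnerProductSpace ℝ H]

theorem orthProj_eq_starProjection (K : Submodule ℝ H) [K.HasOrthogonalProjection] :
    orthProj K = K.starProjection := by
  rw [orthProj, dif_pos ‹_›]
  rfl

theorem starProjection_eq_of_sub_mem_orthogonal (K : Submodule ℝ H) [K.HasOrthogonalProjection]
    {a b : H} (h : a - b ∈ Kᗮ) : K.starProjection a = K.starProjection b := by
  rw [← sub_eq_zero, ← map_sub, starProjection_apply_eq_zero_iff]
  exact h

theorem deltaSub_le_sqrt_one_sub_inv_sq {M N : Submodule ℝ H} [N.HasOrthogonalProjection] {C : ℝ}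
    (hC : 0 < C) (h : ∀ x ∈ M, ‖x‖ ≤ C * ‖N.starProjection x‖) :
    deltaSub M N ≤ √(1 - C⁻¹ ^ 2) := by
  refine Real.sSup_le ?_ (Real.sqrt_nonneg _)
  rintro _ ⟨x, hxM, hx, rfl⟩
  have hPx : C⁻¹ ≤ ‖N.starProjection x‖ := by
    rw [inv_le_iff_one_le_mul₀' hC, ← hx]
    exact h x hxM
  have pythagoras := N.norm_sq_eq_add_norm_sq_starProjection x
  rw [hx, N.starProjection_orthogonal_val] at pythagoras
  calc infDist x N ≤ ‖x - N.starProjection x‖ := by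
        simpa only [dist_eq_norm] using infDist_le_dist_of_mem (N.starProjection_apply_mem x)
    _ ≤ √(1 - C⁻¹ ^ 2) := by
        have hsq : C⁻¹ ^ 2 ≤ ‖N.starProjection x‖ ^ 2 := pow_le_pow_left₀ (inv_pos.2 hC).le hPx 2
        rw [Real.le_sqrt (norm_nonneg _) (by nlinarith [sq_nonneg ‖x - N.starProjection x‖])]
        linarith

theorem finrank_map_of_disjoint_ker {K V V₂ : Type*} [DivisionRing K] [AddCommGroup V] [Module K V]
    [AddCommGroup V₂] [Module K V₂] {f : V →ₗ[K] V₂} {p : Submodule K V}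
    (h : Disjoint p (LinearMap.ker f)) :
    Module.finrank K (p.map f) = Module.finrank K p := by
  have hrange : p.map f = LinearMap.range (f ∘ₗ p.subtype) := by
    rw [LinearMap.range_comp, range_subtype]
  rw [hrange, LinearMap.finrank_range_of_inj]
  refine (injective_iff_map_eq_zero _).2 fun u hu => Subtype.ext ?_
  exact disjoint_def.1 h u u.2 hu

theorem map_starProjection_eq_of_finrank_eq {V W : Submodule ℝ H} [FiniteDimensional ℝ W]
    (hdim : Module.finrank ℝ V = Module.finrank ℝ W) (hVW : Disjoint V Wᗮ) :
    V.map (W.starProjection : H →ₗ[ℝ] H) = W := by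
  refine eq_of_le_of_finrank_eq ?_ ?_
  · simpa using LinearMap.map_le_range (f := (W.starProjection : H →ₗ[ℝ] H)) (p := V)
  · rwa [finrank_map_of_disjoint_ker (by rwa [ker_starProjection])]

end InnerProductSpace

theorem mem_of_tendsto_infDist_zero {α : Type*} [PseudoMetricSpace α] {s : Set α} (hs : IsClosed s)
    {t : ℕ → Set α} (hts : ∀ n, t n ⊆ s) (ht : ∀ n, (t n).Nonempty) {x : α}
    (h : Tendsto (fun n => infDist x (t n)) atTop (𝓝 0)) : x ∈ s := by
  have hs₀ : s.Nonempty := (ht 0).mono (hts 0)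
  have hle : infDist x s ≤ 0 :=
    ge_of_tendsto h (Eventually.of_forall fun n => infDist_le_infDist_of_subset (hts n) (ht n))
  rw [← hs.closure_eq, mem_closure_iff_infDist_zero hs₀]
  exact le_antisymm hle infDist_nonneg

section LeastSquares

variable {X Y : Type*} [NormedAddCommGroup X] [InnerProductSpace ℝ X]
  [NormedAddCommGroup Y] [InnerProductSpace ℝ Y]
  {T : X →L[ℝ] Y} {U : Submodule ℝ X} {D : Y → X} {C : ℝ}

/-- `D` is the Moore–Penrose inverse `(T ∘ P_U)†`, the range of `T ∘ P_U` being `T(U)`. -/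
def IsLeastSquaresInverse (T : X →L[ℝ] Y) (U : Submodule ℝ X) [FiniteDimensional ℝ U]
    (D : Y → X) : Prop :=
  ∀ y, D y ∈ (LinearMap.ker (T ∘L U.starProjection : X →ₗ[ℝ] Y))ᗮ ∧
    (T ∘L U.starProjection) (D y) = (U.map (T : X →ₗ[ℝ] Y)).starProjection y

theorem ker_comp_starProjection_orthogonal_le [U.HasOrthogonalProjection] :
    (LinearMap.ker (T ∘L U.starProjection : X →ₗ[ℝ] Y))ᗮ ≤ U := by
  have hUperp : Uᗮ ≤ LinearMap.ker (T ∘L U.starProjection : X →ₗ[ℝ] Y) := fun u hu => by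
    simp [(starProjection_apply_eq_zero_iff U).2 hu]
  simpa only [orthogonal_orthogonal] using orthogonal_le hUperp

theorem eq_zero_of_mem_ker_comp_starProjection_orthogonal [U.HasOrthogonalProjection] {v : X}
    (hv : v ∈ (LinearMap.ker (T ∘L U.starProjection : X →ₗ[ℝ] Y))ᗮ) (hTv : T v = 0) : v = 0 := by
  have hker : v ∈ LinearMap.ker (T ∘L U.starProjection : X →ₗ[ℝ] Y) := by
    simp [starProjection_eq_self_iff.2 (ker_comp_starProjection_orthogonal_le hv), hTv]
  simpa [inf_orthogonal_eq_bot] using mem_inf.2 ⟨hker, hv⟩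

theorem IsLeastSquaresInverse.apply_mem [FiniteDimensional ℝ U] (hD : IsLeastSquaresInverse T U D)
    (y : Y) : D y ∈ U :=
  ker_comp_starProjection_orthogonal_le (hD y).1

theorem IsLeastSquaresInverse.apply_apply [FiniteDimensional ℝ U]
    (hD : IsLeastSquaresInverse T U D) (y : Y) :
    T (D y) = (U.map (T : X →ₗ[ℝ] Y)).starProjection y := by
  simpa [starProjection_eq_self_iff.2 (hD.apply_mem y)] using (hD y).2

theorem IsLeastSquaresInverse.apply_apply_of_mem [FiniteDimensional ℝ U]
    (hD : IsLeastSquaresInverse T U D) {x : X} (hx : x ∈ U) : T (D (T x)) = T x := by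
  rw [hD.apply_apply, starProjection_eq_self_iff]
  exact mem_map_of_mem hx

/-- By uniqueness of the minimal-norm least-squares solution, `v = D (T x)`. -/
theorem IsLeastSquaresInverse.norm_le [FiniteDimensional ℝ U] (hD : IsLeastSquaresInverse T U D)
    (hC : ∀ x, ‖D (T x)‖ ≤ C * ‖x‖) {v x : X}
    (hv : v ∈ (LinearMap.ker (T ∘L U.starProjection : X →ₗ[ℝ] Y))ᗮ)
    (hvx : T v = (U.map (T : X →ₗ[ℝ] Y)).starProjection (T x)) : ‖v‖ ≤ C * ‖x‖ := by
  have hsub := eq_zero_of_mem_ker_comp_starProjection_orthogonal (sub_mem hv (hD (T x)).1)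
    (by rw [map_sub, hvx, hD.apply_apply, sub_self])
  rw [sub_eq_zero.1 hsub]
  exact hC x

theorem IsLeastSquaresInverse.infDist_ker_inf_le [FiniteDimensional ℝ U]
    (hD : IsLeastSquaresInverse T U D) (hC : ∀ x, ‖D (T x)‖ ≤ C * ‖x‖) {x : X} (hx : T x = 0) :
    infDist x ((LinearMap.ker (T : X →ₗ[ℝ] Y) ⊓ U : Submodule ℝ X) : Set X) ≤
      (1 + C) * ‖x - U.starProjection x‖ := by
  set p := U.starProjection x
  have hp : p ∈ U := U.starProjection_apply_mem x
  have hmem : p - D (T p) ∈ LinearMap.ker (T : X →ₗ[ℝ] Y) ⊓ U := by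
    refine mem_inf.2 ⟨?_, sub_mem hp (hD.apply_mem _)⟩
    simp [hD.apply_apply_of_mem hp]
  have hDp : ‖D (T p)‖ ≤ C * ‖x - p‖ := by
    rw [norm_sub_rev, ← sub_zero (T p), ← hx, ← map_sub]
    exact hC _
  calc infDist x _ ≤ ‖x - (p - D (T p))‖ := by
        simpa only [dist_eq_norm] using infDist_le_dist_of_mem hmem
    _ = ‖(x - p) + D (T p)‖ := by congr 1; abel
    _ ≤ ‖x - p‖ + C * ‖x - p‖ := (norm_add_le _ _).trans (by linarith)
    _ = (1 + C) * ‖x - p‖ := by ring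

theorem mem_ker_iff_tendsto_infDist_ker_inf {Xn : ℕ → Submodule ℝ X}
    [∀ n, FiniteDimensional ℝ (Xn n)] {Dn : ℕ → Y → X}
    (hproj : ∀ x, Tendsto (fun n => (Xn n).starProjection x) atTop (𝓝 x))
    (hD : ∀ n, IsLeastSquaresInverse T (Xn n) (Dn n)) (hC : ∀ n x, ‖Dn n (T x)‖ ≤ C * ‖x‖)
    (x : X) :
    x ∈ LinearMap.ker (T : X →ₗ[ℝ] Y) ↔ Tendsto
      (fun n => infDist x ((LinearMap.ker (T : X →ₗ[ℝ] Y) ⊓ Xn n : Submodule ℝ X) : Set X))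
      atTop (𝓝 0) := by
  refine ⟨fun hx => ?_, mem_of_tendsto_infDist_zero T.isClosed_ker (fun n => inf_le_left)
    (fun n => ⟨0, (LinearMap.ker (T : X →ₗ[ℝ] Y) ⊓ Xn n).zero_mem⟩)⟩
  have hbound : Tendsto (fun n => (1 + C) * ‖x - (Xn n).starProjection x‖) atTop (𝓝 0) := by
    simpa using ((tendsto_const_nhds (x := x)).sub (hproj x)).norm.const_mul (1 + C)
  exact squeeze_zero (fun n => infDist_nonneg) (fun n => (hD n).infDist_ker_inf_le (hC n) hx) hbound

end LeastSquares

section Gap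

variable {X Y : Type*} [NormedAddCommGroup X] [InnerProductSpace ℝ X] [CompleteSpace X]
  [NormedAddCommGroup Y] [InnerProductSpace ℝ Y] [CompleteSpace Y]
  {T : X →L[ℝ] Y} {U : Submodule ℝ X} {D : Y → X} {C : ℝ}

theorem map_adjoint_comp_isOrtho_ker (T : X →L[ℝ] Y) (U : Submodule ℝ X) :
    U.map ((adjoint T ∘L T : X →L[ℝ] X) : X →ₗ[ℝ] X) ⟂ LinearMap.ker (T : X →ₗ[ℝ] Y) := by
  rw [isOrtho_iff_inner_eq]
  rintro _ ⟨u, -, rfl⟩ k hk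
  have hTk : T k = 0 := hk
  rw [ContinuousLinearMap.coe_coe, comp_apply, adjoint_inner_left, hTk, inner_zero_right]

/-- `T (x - P_W x) ⊥ T(U)` for `W = T*T(U)`, since `⟪T u, T y⟫ = ⟪T*T u, y⟫`. -/
theorem starProjection_map_apply_starProjection_map_adjoint_comp [FiniteDimensional ℝ U] (x : X) :
    (U.map (T : X →ₗ[ℝ] Y)).starProjection
        (T ((U.map ((adjoint T ∘L T : X →L[ℝ] X) : X →ₗ[ℝ] X)).starProjection x)) =
      (U.map (T : X →ₗ[ℝ] Y)).starProjection (T x) := by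
  set W := U.map ((adjoint T ∘L T : X →L[ℝ] X) : X →ₗ[ℝ] X)
  refine (starProjection_eq_of_sub_mem_orthogonal _ ?_).symm
  rw [← map_sub, mem_orthogonal]
  rintro _ ⟨u, hu, rfl⟩
  rw [ContinuousLinearMap.coe_coe, ← adjoint_inner_left, ← comp_apply]
  exact (mem_orthogonal _ _).1 (W.sub_starProjection_mem_orthogonal x) _ (mem_map_of_mem hu)

theorem IsLeastSquaresInverse.norm_le_mul_norm_starProjection_map_adjoint_comp
    [FiniteDimensional ℝ U] (hD : IsLeastSquaresInverse T U D) (hC : ∀ x, ‖D (T x)‖ ≤ C * ‖x‖)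
    {v : X} (hv : v ∈ (LinearMap.ker (T ∘L U.starProjection : X →ₗ[ℝ] Y))ᗮ) :
    ‖v‖ ≤ C * ‖(U.map ((adjoint T ∘L T : X →L[ℝ] X) : X →ₗ[ℝ] X)).starProjection v‖ := by
  refine hD.norm_le hC hv ?_
  rw [starProjection_map_apply_starProjection_map_adjoint_comp, eq_comm, starProjection_eq_self_iff]
  exact mem_map_of_mem (ker_comp_starProjection_orthogonal_le hv)

theorem IsLeastSquaresInverse.map_adjoint_comp_eq [FiniteDimensional ℝ U]
    (hD : IsLeastSquaresInverse T U D) :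
    (LinearMap.ker (T ∘L U.starProjection : X →ₗ[ℝ] Y))ᗮ.map
        ((adjoint T ∘L T : X →L[ℝ] X) : X →ₗ[ℝ] X) =
      U.map ((adjoint T ∘L T : X →L[ℝ] X) : X →ₗ[ℝ] X) := by
  refine le_antisymm (map_mono ker_comp_starProjection_orthogonal_le) ?_
  rintro _ ⟨x, hx, rfl⟩
  exact ⟨D (T x), (hD (T x)).1, by simp [hD.apply_apply_of_mem hx]⟩

/-- A dimension count: `T*T` maps `N(T ∘ P_U)ᗮ` isomorphically onto `W = T*T(U)`, and `P_W` is
injective on `N(T ∘ P_U)ᗮ`. -/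
theorem IsLeastSquaresInverse.map_starProjection_map_adjoint_comp [FiniteDimensional ℝ U]
    (hD : IsLeastSquaresInverse T U D) (hC : ∀ x, ‖D (T x)‖ ≤ C * ‖x‖) :
    (LinearMap.ker (T ∘L U.starProjection : X →ₗ[ℝ] Y))ᗮ.map
        ((U.map ((adjoint T ∘L T : X →L[ℝ] X) : X →ₗ[ℝ] X)).starProjection : X →ₗ[ℝ] X) =
      U.map ((adjoint T ∘L T : X →L[ℝ] X) : X →ₗ[ℝ] X) := by
  refine map_starProjection_eq_of_finrank_eq ?_ ?_
  · rw [← hD.map_adjoint_comp_eq, finrank_map_of_disjoint_ker]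
    refine disjoint_def.2 fun v hv hker => eq_zero_of_mem_ker_comp_starProjection_orthogonal hv ?_
    have hker' : v ∈ (adjoint T ∘L T).ker := hker
    rwa [ker_adjoint_comp_self] at hker'
  · refine disjoint_def.2 fun v hv hW => norm_le_zero_iff.1 ?_
    have h := hD.norm_le_mul_norm_starProjection_map_adjoint_comp hC hv
    rwa [(starProjection_apply_eq_zero_iff _).2 hW, norm_zero, mul_zero] at h

theorem IsLeastSquaresInverse.deltaSub_map_starProjection_le [FiniteDimensional ℝ U]
    (hD : IsLeastSquaresInverse T U D) (hC : ∀ x, ‖D (T x)‖ ≤ C * ‖x‖) (hCpos : 0 < C) :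
    deltaSub (U.map (((LinearMap.ker (T : X →ₗ[ℝ] Y))ᗮ.starProjection : X →L[ℝ] X) : X →ₗ[ℝ] X))
      (U.map ((adjoint T ∘L T : X →L[ℝ] X) : X →ₗ[ℝ] X)) ≤ √(1 - C⁻¹ ^ 2) := by
  set N := LinearMap.ker (T : X →ₗ[ℝ] Y)
  set W := U.map ((adjoint T ∘L T : X →L[ℝ] X) : X →ₗ[ℝ] X)
  refine deltaSub_le_sqrt_one_sub_inv_sq hCpos ?_
  rintro _ ⟨z, hz, rfl⟩
  set v := D (T z)
  have hzv : z - v ∈ N := by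
    rw [LinearMap.mem_ker, ContinuousLinearMap.coe_coe, map_sub, hD.apply_apply_of_mem hz, sub_self]
  have hQz : Nᗮ.starProjection z - v ∈ N := by
    rw [starProjection_orthogonal_val, sub_right_comm]
    exact sub_mem hzv (N.starProjection_apply_mem z)
  have hNW : N ≤ Wᗮ := isOrtho_iff_le.1 (map_adjoint_comp_isOrtho_ker T U).symm
  calc ‖Nᗮ.starProjection z‖ = ‖Nᗮ.starProjection v‖ := by
        rw [starProjection_eq_of_sub_mem_orthogonal _ (N.le_orthogonal_orthogonal hzv)]
    _ ≤ ‖v‖ := Nᗮ.norm_starProjection_apply_le v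
    _ ≤ C * ‖W.starProjection v‖ :=
        hD.norm_le_mul_norm_starProjection_map_adjoint_comp hC (hD (T z)).1
    _ = C * ‖W.starProjection (Nᗮ.starProjection z)‖ := by
        rw [starProjection_eq_of_sub_mem_orthogonal W (hNW hQz)]

theorem IsLeastSquaresInverse.deltaSub_map_adjoint_comp_le [FiniteDimensional ℝ U]
    (hD : IsLeastSquaresInverse T U D) (hC : ∀ x, ‖D (T x)‖ ≤ C * ‖x‖) (hCpos : 0 < C) :
    deltaSub (U.map ((adjoint T ∘L T : X →L[ℝ] X) : X →ₗ[ℝ] X))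
      (U.map (((LinearMap.ker (T : X →ₗ[ℝ] Y))ᗮ.starProjection : X →L[ℝ] X) : X →ₗ[ℝ] X)) ≤
        √(1 - C⁻¹ ^ 2) := by
  set Q := (LinearMap.ker (T : X →ₗ[ℝ] Y))ᗮ.starProjection
  set W := U.map ((adjoint T ∘L T : X →L[ℝ] X) : X →ₗ[ℝ] X)
  set M := U.map ((Q : X →L[ℝ] X) : X →ₗ[ℝ] X)
  refine deltaSub_le_sqrt_one_sub_inv_sq hCpos fun u hu => ?_
  obtain ⟨v, hv, hvu⟩ : u ∈ (LinearMap.ker (T ∘L U.starProjection : X →ₗ[ℝ] Y))ᗮ.map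
      (W.starProjection : X →ₗ[ℝ] X) := by
    rwa [hD.map_starProjection_map_adjoint_comp hC]
  rw [ContinuousLinearMap.coe_coe] at hvu
  have hQu : Q u = u :=
    starProjection_eq_self_iff.2 (isOrtho_iff_le.1 (map_adjoint_comp_isOrtho_ker T U) hu)
  have hQvM : Q v ∈ M := mem_map_of_mem (ker_comp_starProjection_orthogonal_le hv)
  have hQv : ‖Q v‖ ≤ C * ‖u‖ := by
    rw [← hvu]
    exact (norm_starProjection_apply_le _ v).trans
      (hD.norm_le_mul_norm_starProjection_map_adjoint_comp hC hv)
  have key : ‖u‖ * ‖u‖ ≤ C * ‖M.starProjection u‖ * ‖u‖ := calc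
    ‖u‖ * ‖u‖ = inner ℝ u (W.starProjection v) := by rw [hvu, real_inner_self_eq_norm_mul_norm]
    _ = inner ℝ u v := by rw [← inner_starProjection_left_eq_right, starProjection_eq_self_iff.2 hu]
    _ = inner ℝ u (Q v) := by rw [← inner_starProjection_left_eq_right, hQu]
    _ = inner ℝ (M.starProjection u) (Q v) := by
        rw [inner_starProjection_left_eq_right, starProjection_eq_self_iff.2 hQvM]
    _ ≤ ‖M.starProjection u‖ * ‖Q v‖ := real_inner_le_norm _ _
    _ ≤ ‖M.starProjection u‖ * (C * ‖u‖) := by gcongr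
    _ = C * ‖M.starProjection u‖ * ‖u‖ := by ring
  rcases (norm_nonneg u).eq_or_lt with hu0 | hupos
  · rw [← hu0]
    positivity
  · exact le_of_mul_le_mul_right key hupos

theorem IsLeastSquaresInverse.gapSub_le [FiniteDimensional ℝ U]
    (hD : IsLeastSquaresInverse T U D) (hC : ∀ x, ‖D (T x)‖ ≤ C * ‖x‖) (hCpos : 0 < C) :
    gapSub (U.map (((LinearMap.ker (T : X →ₗ[ℝ] Y))ᗮ.starProjection : X →L[ℝ] X) : X →ₗ[ℝ] X))
      (U.map ((adjoint T ∘L T : X →L[ℝ] X) : X →ₗ[ℝ] X)) ≤ √(1 - C⁻¹ ^ 2) :=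
  max_le (hD.deltaSub_map_starProjection_le hC hCpos) (hD.deltaSub_map_adjoint_comp_le hC hCpos)

end Gap

variable {X Y : Type*} [NormedAddCommGroup X] [InnerProductSpace ℝ X] [CompleteSpace X]
  [NormedAddCommGroup Y] [InnerProductSpace ℝ Y] [CompleteSpace Y]

theorem stmt18_general
    (T : X →L[ℝ] Y) (Xn : ℕ → Submodule ℝ X)
    (hfin : ∀ n, FiniteDimensional ℝ (Xn n))
    (hproj : ∀ x : X, Tendsto (fun n => orthProj (Xn n) x) atTop (𝓝 x))
    (Tn : ℕ → X →L[ℝ] Y) (hTn : ∀ n, Tn n = T.comp (orthProj (Xn n)))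
    (Tdagn : ℕ → Y → X)
    (hTdagn : ∀ n (y : Y), Tdagn n y ∈ (LinearMap.ker (Tn n : X →ₗ[ℝ] Y))ᗮ ∧
      (Tn n) (Tdagn n y) = orthProj ((Xn n).map (T : X →ₗ[ℝ] Y)) y)
    (hbound : ∃ C : ℝ, ∀ n (x : X), ‖Tdagn n (T x)‖ ≤ C * ‖x‖) :
    (∀ x : X, x ∈ LinearMap.ker (T : X →ₗ[ℝ] Y) ↔
      Tendsto (fun n => Metric.infDist x ((LinearMap.ker (T : X →ₗ[ℝ] Y) ⊓ Xn n : Submodule ℝ X) : Set X))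
        atTop (𝓝 0)) ∧
    (∃ c : ℝ, c < 1 ∧ ∀ n, gapSub ((Xn n).map ((orthProj ((LinearMap.ker (T : X →ₗ[ℝ] Y))ᗮ) : X →L[ℝ] X) : X →ₗ[ℝ] X)) ((Xn n).map (((ContinuousLinearMap.adjoint T).comp T : X →L[ℝ] X) : X →ₗ[ℝ] X)) ≤ c) := by
  obtain ⟨C₀, hC₀⟩ := hbound
  set C := max C₀ 1
  have hCpos : 0 < C := one_pos.trans_le (le_max_right _ _)
  have hC : ∀ n x, ‖Tdagn n (T x)‖ ≤ C * ‖x‖ := fun n x =>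
    (hC₀ n x).trans (mul_le_mul_of_nonneg_right (le_max_left _ _) (norm_nonneg x))
  have hD : ∀ n, IsLeastSquaresInverse T (Xn n) (Tdagn n) := fun n y => by
    simpa only [hTn, orthProj_eq_starProjection] using hTdagn n y
  simp_rw [orthProj_eq_starProjection] at hproj ⊢
  refine ⟨mem_ker_iff_tendsto_infDist_ker_inf hproj hD hC, √(1 - C⁻¹ ^ 2), ?_,
    fun n => (hD n).gapSub_le (hC n) hCpos⟩
  rw [Real.sqrt_lt' one_pos, one_pow, sub_lt_self_iff]
  positivity

/-- Without any finiteness assumption on `N(T)`: `supₙ ‖Tₙ†T‖ < ∞` implies kernel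
approximability and `supₙ gap(P_{N(T)ᗮ}(Xₙ), T*T(Xₙ)) < 1`. -/
theorem stmt18
    (T : X →L[ℝ] Y) (Xn : ℕ → Submodule ℝ X)
    (hfin : ∀ n, FiniteDimensional ℝ (Xn n))
    (hinf : ¬ FiniteDimensional ℝ X)
    (hproj : ∀ x : X, Tendsto (fun n => orthProj (Xn n) x) atTop (𝓝 x))
    (Tn : ℕ → X →L[ℝ] Y) (hTn : ∀ n, Tn n = T.comp (orthProj (Xn n)))
    (Tdagn : ℕ → Y → X)
    (hTdagn : ∀ n (y : Y), Tdagn n y ∈ (LinearMap.ker (Tn n : X →ₗ[ℝ] Y))ᗮ ∧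
      (Tn n) (Tdagn n y) = orthProj ((Xn n).map (T : X →ₗ[ℝ] Y)) y)
    (hbound : ∃ C : ℝ, ∀ n (x : X), ‖Tdagn n (T x)‖ ≤ C * ‖x‖) :
    (∀ x : X, x ∈ LinearMap.ker (T : X →ₗ[ℝ] Y) ↔
      Tendsto (fun n => Metric.infDist x ((LinearMap.ker (T : X →ₗ[ℝ] Y) ⊓ Xn n : Submodule ℝ X) : Set X))
        atTop (𝓝 0)) ∧
    (∃ c : ℝ, c < 1 ∧ ∀ n, gapSub ((Xn n).map ((orthProj ((LinearMap.ker (T : X →ₗ[ℝ] Y))ᗮ) : X →L[ℝ] X) : X →ₗ[ℝ] X)) ((Xn n).map (((ContinuousLinearMap.adjoint T).comp T : X →L[ℝ] X) : X →ₗ[ℝ] X)) ≤ c) :=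
  stmt18_general T Xn hfin hproj Tn hTn Tdagn hTdagn hbound
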